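/- Let ν ≥ 1 and let H₀ and V be Hermitian ν×ν complex matrices. Then ∑_{n=1}^{ν} |λ_n(H₀ + V) − λ_n(H₀)| ≤ 2 ∑_{j=1}^{ν} ∑_{k=1}^{ν} |V_{jk}|. -/

import Mathlib

open Matrix

/-- The eigenvalues of a Hermitian matrix, listed in increasing order
(counted with multiplicity). -/
noncomputable def eigs {ν : ℕ} {A : Matrix (Fin ν) (Fin ν) ℂ} (hA : A.IsHermitian) :
    Fin ν → ℝ :=
  hA.eigenvalues ∘ ⇑(Tuple.sort hA.eigenvalues)

namespace StabAux

open Module Submodule Finset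
open scoped InnerProductSpace ComplexOrder

variable {ν : ℕ} {A V : Matrix (Fin ν) (Fin ν) ℂ}

/-- The sorted orthonormal eigenbasis of a Hermitian matrix. -/
noncomputable def sb (hA : A.IsHermitian) :
    OrthonormalBasis (Fin ν) ℂ (EuclideanSpace ℂ (Fin ν)) :=
  hA.eigenvectorBasis.reindex (Tuple.sort hA.eigenvalues).symm

lemma sb_apply (hA : A.IsHermitian) (j : Fin ν) :
    sb hA j = hA.eigenvectorBasis (Tuple.sort hA.eigenvalues j) := by
  simp [sb]

lemma eigs_mono (hA : A.IsHermitian) : Monotone (eigs hA) :=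
  Tuple.monotone_sort _

lemma toEuclideanLin_sb (hA : A.IsHermitian) (j : Fin ν) :
    Matrix.toEuclideanLin A (sb hA j) = (eigs hA j : ℂ) • sb hA j := by
  rw [sb_apply, toEuclideanLin_apply]
  have h := hA.mulVec_eigenvectorBasis (Tuple.sort hA.eigenvalues j)
  rw [h]
  ext k
  simp [eigs, Complex.real_smul]

lemma parseval (b : OrthonormalBasis (Fin ν) ℂ (EuclideanSpace ℂ (Fin ν)))
    (x : EuclideanSpace ℂ (Fin ν)) : ‖x‖^2 = ∑ j, ‖b.repr x j‖^2 := by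
  rw [← b.repr.norm_map x, EuclideanSpace.norm_eq, Real.sq_sqrt (by positivity)]

lemma quad_expand (T : EuclideanSpace ℂ (Fin ν) →ₗ[ℂ] EuclideanSpace ℂ (Fin ν))
    (b : OrthonormalBasis (Fin ν) ℂ (EuclideanSpace ℂ (Fin ν))) (f : Fin ν → ℝ)
    (hT : ∀ j, T (b j) = (f j : ℂ) • b j) (x : EuclideanSpace ℂ (Fin ν)) :
    ⟪x, T x⟫_ℂ = ∑ j, (f j : ℂ) * (‖b.repr x j‖^2 : ℝ) := by
  conv_lhs => rw [← b.sum_repr x, map_sum, inner_sum]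
  rw [b.sum_repr x]
  congr 1; ext j
  rw [_root_.map_smul, hT j, smul_smul, inner_smul_right, ← inner_conj_symm x,
    b.repr_apply_apply, mul_comm ⟪b j, x⟫_ℂ ((f j : ℂ)), mul_assoc, Complex.mul_conj']
  push_cast
  ring

lemma quad_re (T : EuclideanSpace ℂ (Fin ν) →ₗ[ℂ] EuclideanSpace ℂ (Fin ν))
    (b : OrthonormalBasis (Fin ν) ℂ (EuclideanSpace ℂ (Fin ν))) (f : Fin ν → ℝ)
    (hT : ∀ j, T (b j) = (f j : ℂ) • b j) (x : EuclideanSpace ℂ (Fin ν)) :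
    (⟪x, T x⟫_ℂ).re = ∑ j, f j * ‖b.repr x j‖^2 := by
  rw [quad_expand T b f hT x]
  push_cast [Complex.re_sum]
  simp [← Complex.ofReal_pow]

lemma repr_eq_zero_of_mem_span (b : OrthonormalBasis (Fin ν) ℂ (EuclideanSpace ℂ (Fin ν)))
    (s : Set (Fin ν)) {x : EuclideanSpace ℂ (Fin ν)}
    (hx : x ∈ Submodule.span ℂ (⇑b '' s)) {j : Fin ν} (hj : j ∉ s) :
    b.repr x j = 0 := by
  rw [b.repr_apply_apply]
  induction hx using Submodule.span_induction with
  | mem y hy =>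
    obtain ⟨k, hk, rfl⟩ := hy
    exact b.orthonormal.2 (fun h => hj (h ▸ hk))
  | zero => simp
  | add y z _ _ hy hz => rw [inner_add_right, hy, hz, add_zero]
  | smul c y _ hy => rw [inner_smul_right, hy, mul_zero]

lemma finrank_span_on (b : OrthonormalBasis (Fin ν) ℂ (EuclideanSpace ℂ (Fin ν))) (s : Set (Fin ν))
    [Fintype s] :
    Module.finrank ℂ (Submodule.span ℂ (⇑b '' s)) = Fintype.card s := by
  have hli : LinearIndependent ℂ (fun j : s => b j) :=
    b.orthonormal.linearIndependent.comp Subtype.val Subtype.val_injective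
  have := finrank_span_eq_card hli
  rwa [show Set.range (fun j : s => b j) = ⇑b '' s by ext y; simp] at this

lemma quad_nonneg {B : Matrix (Fin ν) (Fin ν) ℂ} (hB : B.PosSemidef)
    (x : EuclideanSpace ℂ (Fin ν)) : 0 ≤ (⟪x, Matrix.toEuclideanLin B x⟫_ℂ).re := by
  rw [EuclideanSpace.inner_eq_star_dotProduct, toEuclideanLin_apply, dotProduct_comm]
  exact hB.re_dotProduct_nonneg _

/-- Monotonicity of sorted eigenvalues under positive semidefinite perturbation. -/
lemma eigs_le_eigs {A C : Matrix (Fin ν) (Fin ν) ℂ} (hA : A.IsHermitian) (hC : C.IsHermitian)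
    (h : (C - A).PosSemidef) (i : Fin ν) : eigs hA i ≤ eigs hC i := by
  classical
  set S := Submodule.span ℂ (⇑(sb hC) '' Set.Iic i) with hS
  set T := Submodule.span ℂ (⇑(sb hA) '' Set.Ici i) with hT
  have hdS : Module.finrank ℂ S = (i : ℕ) + 1 := by
    rw [hS, finrank_span_on]; simp [Fintype.card_ofFinset]
  have hdT : Module.finrank ℂ T = ν - (i : ℕ) := by
    rw [hT, finrank_span_on]; simp [Fintype.card_ofFinset, Fin.card_Ici]
  have hinf : S ⊓ T ≠ ⊥ := by
    intro hbot
    have := Submodule.finrank_sup_add_finrank_inf_eq S T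
    rw [hbot, finrank_bot, add_zero, hdS, hdT] at this
    have hle : Module.finrank ℂ ↥(S ⊔ T) ≤ ν := by
      simpa [finrank_euclideanSpace_fin] using (S ⊔ T).finrank_le
    have := i.isLt
    omega
  obtain ⟨x, hx, hx0⟩ := Submodule.exists_mem_ne_zero_of_ne_bot hinf
  have hxS : x ∈ S := hx.1
  have hxT : x ∈ T := hx.2
  have hA_lb : eigs hA i * ‖x‖^2 ≤ (⟪x, Matrix.toEuclideanLin A x⟫_ℂ).re := by
    rw [quad_re _ (sb hA) (eigs hA) (toEuclideanLin_sb hA) x, parseval (sb hA) x, mul_comm,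
      Finset.sum_mul]
    refine Finset.sum_le_sum fun j _ => ?_
    by_cases hj : j ∈ Set.Ici i
    · have := mul_le_mul_of_nonneg_right (eigs_mono hA hj) (sq_nonneg ‖(sb hA).repr x j‖)
      linarith
    · rw [repr_eq_zero_of_mem_span (sb hA) _ hxT hj]; simp
  have hC_ub : (⟪x, Matrix.toEuclideanLin C x⟫_ℂ).re ≤ eigs hC i * ‖x‖^2 := by
    rw [quad_re _ (sb hC) (eigs hC) (toEuclideanLin_sb hC) x, parseval (sb hC) x, mul_comm,
      Finset.sum_mul]
    refine Finset.sum_le_sum fun j _ => ?_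
    by_cases hj : j ∈ Set.Iic i
    · have := mul_le_mul_of_nonneg_right (eigs_mono hC hj) (sq_nonneg ‖(sb hC).repr x j‖)
      linarith
    · rw [repr_eq_zero_of_mem_span (sb hC) _ hxS hj]; simp
  have hmid : (⟪x, Matrix.toEuclideanLin A x⟫_ℂ).re ≤ (⟪x, Matrix.toEuclideanLin C x⟫_ℂ).re := by
    have h0 := quad_nonneg h x
    rw [map_sub] at h0
    simp only [LinearMap.sub_apply, inner_sub_right, Complex.sub_re] at h0
    linarith
  have hnx : (0:ℝ) < ‖x‖^2 := pow_pos (norm_pos_iff.mpr hx0) 2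
  have := (hA_lb.trans hmid).trans hC_ub
  exact le_of_mul_le_mul_right (by linarith) hnx

lemma trace_conj (W : Matrix.unitaryGroup (Fin ν) ℂ) (d : Fin ν → ℂ) :
    ((W : Matrix (Fin ν) (Fin ν) ℂ) * diagonal d * star (W : Matrix (Fin ν) (Fin ν) ℂ)).trace
      = ∑ i, d i := by
  rw [trace_mul_cycle, Unitary.coe_star_mul_self W, one_mul, trace_diagonal]

lemma sum_eigs_eq (hA : A.IsHermitian) : ∑ i, eigs hA i = A.trace.re := by
  have h1 : ∑ i, eigs hA i = ∑ i, hA.eigenvalues i :=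
    Fintype.sum_equiv (Tuple.sort hA.eigenvalues) _ _ (fun i => rfl)
  have h2 : A.trace = ∑ i, (hA.eigenvalues i : ℂ) := by
    conv_lhs => rw [hA.spectral_theorem]
    exact trace_conj hA.eigenvectorUnitary (RCLike.ofReal ∘ hA.eigenvalues)
  rw [h1, h2, Complex.re_sum]
  simp

lemma row_norm (hV : V.IsHermitian) (j : Fin ν) :
    ∑ i, ‖hV.eigenvectorBasis i j‖ ^ 2 = 1 := by
  have h : ((hV.eigenvectorUnitary : Matrix (Fin ν) (Fin ν) ℂ) *
      star (hV.eigenvectorUnitary : Matrix (Fin ν) (Fin ν) ℂ)) j j = 1 := by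
    rw [mem_unitaryGroup_iff.mp hV.eigenvectorUnitary.2]; simp
  rw [Matrix.mul_apply] at h
  have heq : ∀ i, ((hV.eigenvectorUnitary : Matrix (Fin ν) (Fin ν) ℂ) j i *
      (star (hV.eigenvectorUnitary : Matrix (Fin ν) (Fin ν) ℂ)) i j)
      = ((‖hV.eigenvectorBasis i j‖ ^ 2 : ℝ) : ℂ) := by
    intro i
    rw [Matrix.star_apply, IsHermitian.eigenvectorUnitary_apply]
    simp [Complex.mul_conj']
  rw [Finset.sum_congr rfl (fun i _ => heq i)] at h
  exact_mod_cast h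

/-- Trace-norm bound: the sum of absolute values of eigenvalues of a Hermitian matrix is
at most the entrywise ℓ¹ norm. -/
lemma sum_abs_eigenvalues_le (hV : V.IsHermitian) :
    ∑ i, |hV.eigenvalues i| ≤ ∑ j, ∑ k, ‖V j k‖ := by
  set b : Fin ν → Fin ν → ℂ := fun i j => hV.eigenvectorBasis i j with hb
  have hrow : ∀ j, ∑ i, ‖b i j‖ ^ 2 = 1 := fun j => row_norm hV j
  have habs : ∀ i, |hV.eigenvalues i| ≤
      ∑ j, ∑ k, ‖V j k‖ * (‖b i j‖ * ‖b i k‖) := by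
    intro i
    rw [hV.eigenvalues_eq i]
    refine le_trans (Complex.abs_re_le_norm _) ?_
    rw [show star ⇑(hV.eigenvectorBasis i) ⬝ᵥ
        V *ᵥ ⇑(hV.eigenvectorBasis i)
        = ∑ j, ∑ k, (starRingEnd ℂ) (b i j) * (V j k * b i k) by
      simp [dotProduct, Matrix.mulVec, Finset.mul_sum, hb, Pi.star_apply,
        RCLike.star_def]]
    refine le_trans (norm_sum_le _ _) (Finset.sum_le_sum fun j _ => ?_)
    refine le_trans (norm_sum_le _ _) (Finset.sum_le_sum fun k _ => ?_)
    rw [norm_mul, norm_mul, Complex.norm_conj]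
    exact le_of_eq (by ring)
  calc ∑ i, |hV.eigenvalues i|
      ≤ ∑ i, ∑ j, ∑ k, ‖V j k‖ * (‖b i j‖ * ‖b i k‖) :=
        Finset.sum_le_sum fun i _ => habs i
    _ = ∑ j, ∑ k, ‖V j k‖ * (∑ i, ‖b i j‖ * ‖b i k‖) := by
        rw [Finset.sum_comm]
        refine Finset.sum_congr rfl fun j _ => ?_
        rw [Finset.sum_comm]
        exact Finset.sum_congr rfl fun k _ => (Finset.mul_sum _ _ _).symm
    _ ≤ ∑ j, ∑ k, ‖V j k‖ * 1 := by
        refine Finset.sum_le_sum fun j _ => Finset.sum_le_sum fun k _ => ?_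
        refine mul_le_mul_of_nonneg_left ?_ (norm_nonneg _)
        have h2 := Finset.sum_mul_sq_le_sq_mul_sq Finset.univ
          (fun i => ‖b i j‖) (fun i => ‖b i k‖)
        rw [hrow j, hrow k, mul_one] at h2
        have h3 : (0:ℝ) ≤ ∑ i, ‖b i j‖ * ‖b i k‖ :=
          Finset.sum_nonneg fun i _ => mul_nonneg (norm_nonneg _) (norm_nonneg _)
        nlinarith
    _ = ∑ j, ∑ k, ‖V j k‖ := by simp

end StabAux

open StabAux in
open scoped ComplexOrder in
/-- for Hermitian `H₀`, `V`,
`∑ₙ |λₙ(H₀ + V) − λₙ(H₀)| ≤ 2 ∑ⱼₖ |Vⱼₖ|`. -/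
theorem stability_eigenvalue_estimate (ν : ℕ) (hν : 1 ≤ ν)
    (H₀ V : Matrix (Fin ν) (Fin ν) ℂ)
    (hH₀ : H₀.IsHermitian) (hV : V.IsHermitian) :
    ∑ n : Fin ν, |eigs (hH₀.add hV) n - eigs hH₀ n| ≤
      2 * ∑ j : Fin ν, ∑ k : Fin ν, ‖V j k‖ := by
  classical
  set μ : Fin ν → ℝ := hV.eigenvalues with hμ
  set W := hV.eigenvectorUnitary with hWdef
  set P : Matrix (Fin ν) (Fin ν) ℂ :=
    (W : Matrix (Fin ν) (Fin ν) ℂ) * diagonal (fun i => ((max (μ i) 0 : ℝ) : ℂ)) *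
      star (W : Matrix (Fin ν) (Fin ν) ℂ) with hPdef
  set N : Matrix (Fin ν) (Fin ν) ℂ :=
    (W : Matrix (Fin ν) (Fin ν) ℂ) * diagonal (fun i => ((max (-μ i) 0 : ℝ) : ℂ)) *
      star (W : Matrix (Fin ν) (Fin ν) ℂ) with hNdef
  have hPpsd : P.PosSemidef := by
    have hd : Matrix.PosSemidef (diagonal (fun i => ((max (μ i) 0 : ℝ) : ℂ))) :=
      posSemidef_diagonal_iff.mpr fun i => by exact_mod_cast le_max_right (μ i) 0
    simpa [hPdef, Matrix.star_eq_conjTranspose] using hd.mul_mul_conjTranspose_same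
      (W : Matrix (Fin ν) (Fin ν) ℂ)
  have hNpsd : N.PosSemidef := by
    have hd : Matrix.PosSemidef (diagonal (fun i => ((max (-μ i) 0 : ℝ) : ℂ))) :=
      posSemidef_diagonal_iff.mpr fun i => by exact_mod_cast le_max_right (-μ i) 0
    simpa [hNdef, Matrix.star_eq_conjTranspose] using hd.mul_mul_conjTranspose_same
      (W : Matrix (Fin ν) (Fin ν) ℂ)
  have hdiag : (diagonal fun i => ((max (μ i) 0 : ℝ) : ℂ))
      - diagonal (RCLike.ofReal ∘ hV.eigenvalues)
      = diagonal (fun i => ((max (-μ i) 0 : ℝ) : ℂ)) := by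
    rw [diagonal_sub]
    refine congrArg diagonal ?_
    funext i
    simp only [Pi.sub_apply, Function.comp_apply, hμ]
    have hr : (max (hV.eigenvalues i) 0 : ℝ) - hV.eigenvalues i = max (-hV.eigenvalues i) 0 := by
      simp only [max_def]; split_ifs <;> linarith
    rw [show (RCLike.ofReal (hV.eigenvalues i) : ℂ) = ((hV.eigenvalues i : ℝ) : ℂ) from rfl,
      ← Complex.ofReal_sub, hr]
  have hPV : P - V = N := by
    conv_lhs => rw [hV.spectral_theorem, Unitary.conjStarAlgAut_apply]
    rw [hPdef, ← sub_mul, ← mul_sub, hdiag]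
  set K := H₀ + V with hK
  have hKH : K.IsHermitian := hH₀.add hV
  have hHP : (H₀ + P).IsHermitian := hH₀.add hPpsd.isHermitian
  have hHN : (H₀ - N).IsHermitian := hH₀.sub hNpsd.isHermitian
  have h1 : ∀ i, eigs hKH i ≤ eigs hHP i := by
    intro i
    refine eigs_le_eigs hKH hHP ?_ i
    rw [show (H₀ + P) - K = P - V by rw [hK]; abel, hPV]
    exact hNpsd
  have h2 : ∀ i, eigs hHN i ≤ eigs hKH i := by
    intro i
    refine eigs_le_eigs hHN hKH ?_ i
    rw [show K - (H₀ - N) = V + N by rw [hK]; abel, show V + N = P by rw [← hPV]; abel]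
    exact hPpsd
  have h3 : ∀ i, eigs hH₀ i ≤ eigs hHP i := by
    intro i
    refine eigs_le_eigs hH₀ hHP ?_ i
    rw [show (H₀ + P) - H₀ = P by abel]
    exact hPpsd
  have h4 : ∀ i, eigs hHN i ≤ eigs hH₀ i := by
    intro i
    refine eigs_le_eigs hHN hH₀ ?_ i
    rw [show H₀ - (H₀ - N) = N by abel]
    exact hNpsd
  have key : ∀ i, |eigs hKH i - eigs hH₀ i| ≤
      (eigs hHP i - eigs hH₀ i) + (eigs hH₀ i - eigs hHN i) := by
    intro i
    rw [abs_le]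
    constructor
    · have := h2 i; have := h3 i; linarith
    · have := h1 i; have := h4 i; linarith
  have hPt : P.trace.re = ∑ i, max (μ i) 0 := by
    rw [hPdef, trace_conj W (fun i => ((max (μ i) 0 : ℝ) : ℂ)), Complex.re_sum]
    simp
  have hNt : N.trace.re = ∑ i, max (-μ i) 0 := by
    rw [hNdef, trace_conj W (fun i => ((max (-μ i) 0 : ℝ) : ℂ)), Complex.re_sum]
    simp
  have hsum : ∑ n : Fin ν, |eigs hKH n - eigs hH₀ n| ≤ ∑ i, |μ i| := by
    refine le_trans (Finset.sum_le_sum fun i _ => key i) ?_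
    rw [Finset.sum_add_distrib, Finset.sum_sub_distrib, Finset.sum_sub_distrib,
      sum_eigs_eq hHP, sum_eigs_eq hH₀, sum_eigs_eq hHN, trace_add, trace_sub,
      Complex.add_re, Complex.sub_re]
    rw [show H₀.trace.re + P.trace.re - H₀.trace.re + (H₀.trace.re - (H₀.trace.re - N.trace.re))
      = P.trace.re + N.trace.re by ring, hPt, hNt, ← Finset.sum_add_distrib]
    exact le_of_eq (Finset.sum_congr rfl fun i _ => max_zero_add_max_neg_zero_eq_abs_self (μ i))
  have hfin : ∑ i, |μ i| ≤ ∑ j, ∑ k, ‖V j k‖ := sum_abs_eigenvalues_le hV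
  have hnn : (0:ℝ) ≤ ∑ j : Fin ν, ∑ k : Fin ν, ‖V j k‖ :=
    Finset.sum_nonneg fun j _ => Finset.sum_nonneg fun k _ => norm_nonneg _
  calc ∑ n : Fin ν, |eigs (hH₀.add hV) n - eigs hH₀ n|
      = ∑ n : Fin ν, |eigs hKH n - eigs hH₀ n| := rfl
    _ ≤ ∑ i, |μ i| := hsum
    _ ≤ ∑ j, ∑ k, ‖V j k‖ := hfin
    _ ≤ 2 * ∑ j, ∑ k, ‖V j k‖ := by linarith
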